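/- A pure conditional expression e is a weak GNW tautology if and only if its classicalization ē is a classical tautology. -/

import Mathlib

/-- The three truth values `0`, `1`, `⊥`. -/
inductive Tri : Type
  | zero : Tri
  | one : Tri
  | bot : Tri
deriving DecidableEq

/-- GNW conditioning: `(x |_GNW y) = ⊥` if `y = 0`; `= x` if `y = 1`; and for
`y = ⊥` it is `0` if `x = 0` and `⊥` otherwise. -/
def gnwCond (x y : Tri) : Tri :=
  match y with
  | .zero => .bot
  | .one => x
  | .bot => match x with
    | .zero => .zero
    | _ => .bot

/-- Pure conditional expressions: propositional variables closed under the
binary connective `|` alone. `cond a b` denotes `(a | b)`. -/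
inductive PureExpr : Type
  | var : ℕ → PureExpr
  | cond : PureExpr → PureExpr → PureExpr

/-- The GNW value of a pure conditional expression under a 3-valued valuation. -/
def gnwEval (v : ℕ → Tri) : PureExpr → Tri
  | .var n => v n
  | .cond a b => gnwCond (gnwEval v a) (gnwEval v b)

/-- The classical value of the classicalization `ē` of a pure conditional
expression under a 2-valued valuation: every `(x | y)` is read as the reversed
implication `y → x`. -/
def clEval (v : ℕ → Bool) : PureExpr → Bool
  | .var n => v n
  | .cond a b => !(clEval v b) || clEval v a


theorem gnw_cl_key (e : PureExpr) (v : ℕ → Tri) :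
    clEval (fun n => decide (v n ≠ Tri.zero)) e = decide (gnwEval v e ≠ Tri.zero) := by
  induction e with
  | var n => cases h : v n <;> simp [clEval, gnwEval, h]
  | cond a b iha ihb =>
    cases ha : gnwEval v a <;> cases hb : gnwEval v b <;>
      simp_all [clEval, gnwEval, gnwCond]

/-- A pure conditional expression is a weak GNW tautology iff its
classicalization is a classical tautology. -/
theorem weak_gnw_tautology_iff_classical (e : PureExpr) :
    (∀ v : ℕ → Tri, gnwEval v e ≠ Tri.zero) ↔ (∀ v : ℕ → Bool, clEval v e = true) := by
  constructor
  · intro h v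
    have := gnw_cl_key e (fun n => if v n then Tri.one else Tri.zero)
    have hw : (fun n => decide ((if v n then Tri.one else Tri.zero) ≠ Tri.zero)) = v := by
      funext n; cases v n <;> simp
    rw [hw] at this
    rw [this]
    simp [h]
  · intro h v hz
    have := gnw_cl_key e v
    rw [h] at this
    simp [hz] at this
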